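/- For every m ≥ 1: E_{1,m+1} = E_{1,m} · δ_m · E_{1,m} and E_{2,m+1} = E_{1,m} · δ_m · E_{1,m} · δ_m · E_{1,m} (concatenations of words and the single letter δ_m). -/
import Mathlib


/-- The alphabet: letters a, b (for the period-doubling sequence) and c (used by Θ₂). -/
inductive Letter : Type
  | a | b | c
deriving DecidableEq, Repr

open Letter

/-- The period-doubling substitution σ : a ↦ ab, b ↦ aa, extended to words
(the extra letter c is left untouched; it is never produced). -/
def sigmaw : List Letter → List Letter :=
  fun w => w.flatMap fun x => match x with
    | .a => [.a, .b]
    | .b => [.a, .a]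
    | .c => [.c]

/-- A_m = σ^m(a). -/
def A (m : ℕ) : List Letter := sigmaw^[m] [.a]

/-- B_m = σ^m(b). -/
def B (m : ℕ) : List Letter := sigmaw^[m] [.b]

/-- δ_m, the last letter of A_m. -/
def delta (m : ℕ) : Letter := (A m).getLastD .a

/-- The period-doubling sequence D, as a function giving its (n+1)-st letter
(0-indexed); it is the fixed point of σ beginning with a, and A_{n+1} is a
prefix of it of length 2^{n+1} > n. -/
def D (n : ℕ) : Letter := (A (n + 1)).getD n .a

/-- The finite segment D[i .. i+len−1] of the period-doubling sequence,
with 1-based starting position i. -/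
def Dseg (i len : ℕ) : List Letter := (List.range len).map fun k => D (i - 1 + k)

/-- u occurs in the finite word w at (1-based) position i. -/
def OccursAt {α : Type*} (u w : List α) (i : ℕ) : Prop :=
  1 ≤ i ∧ i - 1 + u.length ≤ w.length ∧ (w.drop (i - 1)).take u.length = u

/-- u is a factor of the finite word w. -/
def IsFactor {α : Type*} (u w : List α) : Prop := ∃ i, OccursAt u w i

/-- u occurs in the period-doubling sequence D at (1-based) position i. -/
def DOccursAt (u : List Letter) (i : ℕ) : Prop := 1 ≤ i ∧ Dseg i u.length = u

/-- u is a factor of the period-doubling sequence D. -/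
def FactorD (u : List Letter) : Prop := ∃ i, DOccursAt u i

/-- L(u,p): the starting position of the p-th occurrence (p ≥ 1) of u in D. -/
noncomputable def L (u : List Letter) (p : ℕ) : ℕ := Nat.nth (DOccursAt u) (p - 1)

/-- r_p(u): the p-th return word of u (p ≥ 1), i.e. D[L(u,p) .. L(u,p+1)−1];
r_0(u) is the prefix of D preceding the first occurrence of u. -/
noncomputable def r (u : List Letter) (p : ℕ) : List Letter :=
  if p = 0 then Dseg 1 (L u 1 - 1) else Dseg (L u p) (L u (p + 1) - L u p)

/-- The morphism τ₁ : a ↦ a, b ↦ bb, extended to words. -/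
def tau1 : List Letter → List Letter :=
  fun w => w.flatMap fun x => match x with
    | .a => [.a]
    | .b => [.b, .b]
    | .c => [.c]

/-- The morphism τ₂ : a ↦ ab, b ↦ acac, extended to words. -/
def tau2 : List Letter → List Letter :=
  fun w => w.flatMap fun x => match x with
    | .a => [.a, .b]
    | .b => [.a, .c, .a, .c]
    | .c => [.c]

/-- Θ₁[p], the p-th letter (p ≥ 1) of Θ₁ = τ₁(D): since |τ₁(w)| ≥ |w|, the p-th
letter of Θ₁ is the p-th letter of the image of the length-p prefix of D. -/
def Theta1 (p : ℕ) : Letter := (tau1 (Dseg 1 p)).getD (p - 1) .a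

/-- Θ₂[p], the p-th letter (p ≥ 1) of Θ₂ = τ₂(D). -/
def Theta2 (p : ℕ) : Letter := (tau2 (Dseg 1 p)).getD (p - 1) .a

/-- The envelope word E_{1,m} = A_m with its last letter δ_m deleted. -/
def E1 (m : ℕ) : List Letter := (A m).dropLast

/-- The envelope word E_{2,m} = B_m B_{m−1} with its last letter δ_m deleted. -/
def E2 (m : ℕ) : List Letter := (B m ++ B (m - 1)).dropLast

/-- Enumeration of the envelope words in the order
E_{1,1} ⊏ E_{2,1} ⊏ E_{1,2} ⊏ E_{2,2} ⊏ …. -/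
def Eword (k : ℕ) : List Letter := if k % 2 = 0 then E1 (k / 2 + 1) else E2 (k / 2 + 1)

/-- Env(u): the ⊏-least envelope word having u as a factor. -/
noncomputable def Env (u : List Letter) : List Letter :=
  Eword (sInf {k | IsFactor u (Eword k)})

/-- The letterwise complement exchanging a and b. -/
def comp : Letter → Letter
  | .a => .b
  | .b => .a
  | .c => .c

lemma sigmaw_append (u v : List Letter) : sigmaw (u ++ v) = sigmaw u ++ sigmaw v :=
  List.flatMap_append ..

lemma iter_sigmaw_append (m : ℕ) (u v : List Letter) :
    sigmaw^[m] (u ++ v) = sigmaw^[m] u ++ sigmaw^[m] v := by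
  induction m generalizing u v with
  | zero => simp
  | succ n ih => simp [Function.iterate_succ_apply, sigmaw_append, ih]

lemma A_succ (m : ℕ) : A (m + 1) = A m ++ B m := by
  rw [A, Function.iterate_succ_apply, show sigmaw [Letter.a] = [Letter.a] ++ [Letter.b] from rfl,
    iter_sigmaw_append]; rfl

lemma B_succ (m : ℕ) : B (m + 1) = A m ++ A m := by
  rw [B, Function.iterate_succ_apply, show sigmaw [Letter.b] = [Letter.a] ++ [Letter.a] from rfl,
    iter_sigmaw_append]; rfl

lemma comp_comp (x : Letter) : comp (comp x) = x := by cases x <;> rfl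

lemma key (m : ℕ) : A m = E1 m ++ [delta m] ∧ B m = E1 m ++ [comp (delta m)] := by
  induction m with
  | zero => constructor <;> rfl
  | succ n ih =>
    obtain ⟨hA, hB⟩ := ih
    have hA1 : A (n + 1) = (E1 n ++ delta n :: E1 n) ++ [comp (delta n)] := by
      rw [A_succ, hA, hB]; simp
    have hB1 : B (n + 1) = (E1 n ++ delta n :: E1 n) ++ [delta n] := by
      rw [B_succ, hA]; simp
    have hE : E1 (n + 1) = E1 n ++ delta n :: E1 n := by
      rw [E1, hA1, List.dropLast_concat]
    have hd : delta (n + 1) = comp (delta n) := by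
      rw [delta, hA1, List.getLastD_concat]
    refine ⟨by rw [hA1, hE, hd], by rw [hB1, hE, hd, comp_comp]⟩

/-- For every m ≥ 1, E_{1,m+1} = E_{1,m} δ_m E_{1,m} and
E_{2,m+1} = E_{1,m} δ_m E_{1,m} δ_m E_{1,m}. -/
theorem envelope_recursions (m : ℕ) (hm : 1 ≤ m) :
    E1 (m + 1) = E1 m ++ delta m :: E1 m ∧
    E2 (m + 1) = E1 m ++ delta m :: E1 m ++ delta m :: E1 m := by
  obtain ⟨hA, hB⟩ := key m
  have hE : E1 (m + 1) = E1 m ++ delta m :: E1 m := by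
    rw [E1, A_succ, hA, hB, show E1 m ++ [delta m] ++ (E1 m ++ [comp (delta m)])
      = (E1 m ++ delta m :: E1 m) ++ [comp (delta m)] by simp, List.dropLast_concat]
  refine ⟨hE, ?_⟩
  rw [E2, show m + 1 - 1 = m from rfl, B_succ, hA, hB,
    show E1 m ++ [delta m] ++ (E1 m ++ [delta m]) ++ (E1 m ++ [comp (delta m)])
      = (E1 m ++ delta m :: E1 m ++ delta m :: E1 m) ++ [comp (delta m)] by simp,
    List.dropLast_concat]
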